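/- Consider a conservative mass-action system such that all of its critical semi-locking sets are dynamically non-emptiable and it has no two distinct nested critical locking sets (no distinct critical locking sets I₁, I₂ with I₁ ⊂ I₂). Then the system is persistent: for every x₀ ∈ ℝ^m_{>0}, ω(x₀) ∩ ∂ℝ^m_{>0} = ∅. -/

import Mathlib

open scoped BigOperators
open Matrix Filter

/-- The stoichiometric matrix `Γ ∈ ℝ^{m×r}`, `Γ j i = β i j - α i j`. -/
noncomputable def Gamma {m r : ℕ} (a b : Fin r → Fin m → ℕ) : Matrix (Fin m) (Fin r) ℝ :=
  fun j i => (b i j : ℝ) - (a i j : ℝ)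

/-- Mass-action reaction rates `R_i(x) = k_i ∏_j x_j^{α_{ij}}`. -/
noncomputable def rate {m r : ℕ} (a : Fin r → Fin m → ℕ) (k : Fin r → ℝ)
    (x : Fin m → ℝ) : Fin r → ℝ :=
  fun i => k i * ∏ j, x j ^ (a i j)

/-- A nonempty `I` is a semi-locking set (siphon) if every reaction producing a species
in `I` consumes a species in `I`. -/
def IsSemiLocking {m r : ℕ} (a b : Fin r → Fin m → ℕ) (I : Set (Fin m)) : Prop :=
  I.Nonempty ∧ ∀ i : Fin r, (∃ j ∈ I, 0 < b i j) → ∃ l ∈ I, 0 < a i l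

/-- A nonempty `I` is a locking set (deadlock) if every reaction consumes a species in `I`. -/
def IsLocking {m r : ℕ} (a : Fin r → Fin m → ℕ) (I : Set (Fin m)) : Prop :=
  I.Nonempty ∧ ∀ i : Fin r, ∃ l ∈ I, 0 < a i l

/-- `L_I = {x ∈ ℝ^m_{≥0} : x_i = 0 for i ∈ I, x_i > 0 for i ∉ I}`. -/
def LI {m : ℕ} (I : Set (Fin m)) : Set (Fin m → ℝ) :=
  {x | (∀ i, 0 ≤ x i) ∧ (∀ i ∈ I, x i = 0) ∧ ∀ i ∉ I, 0 < x i}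

/-- Boundary of the positive orthant of `ℝ^m`. -/
def posBoundary (m : ℕ) : Set (Fin m → ℝ) :=
  {x | (∀ i, 0 ≤ x i) ∧ ∃ i, x i = 0}

/-- The stoichiometric subspace `S = range Γ`. -/
noncomputable def stoichSubspace {m r : ℕ} (a b : Fin r → Fin m → ℕ) :
    Submodule ℝ (Fin m → ℝ) :=
  LinearMap.range (Gamma a b).mulVecLin

/-- The positive stoichiometric compatibility class `C_{x₀} = (x₀ + S) ∩ ℝ^m_{>0}`. -/
def compatClass {m r : ℕ} (a b : Fin r → Fin m → ℕ) (x₀ : Fin m → ℝ) :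
    Set (Fin m → ℝ) :=
  {x | (∀ i, 0 < x i) ∧ x - x₀ ∈ stoichSubspace a b}

/-- `F_I = closure(C_{x₀}) ∩ L_I`. -/
def FI {m r : ℕ} (a b : Fin r → Fin m → ℕ) (x₀ : Fin m → ℝ) (I : Set (Fin m)) :
    Set (Fin m → ℝ) :=
  closure (compatClass a b x₀) ∩ LI I

/-- The dimension of the affine hull of a set in `ℝ^m`. -/
noncomputable def setDim {m : ℕ} (F : Set (Fin m → ℝ)) : ℕ :=
  Module.finrank ℝ (affineSpan ℝ F).direction

/-- `F` is a facet of a compatibility class: nonempty with affine-hull dimension `s - 1`,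
where `s = rank Γ`. -/
def IsFacet {m r : ℕ} (a b : Fin r → Fin m → ℕ) (F : Set (Fin m → ℝ)) : Prop :=
  F.Nonempty ∧ setDim F = (Gamma a b).rank - 1

/-- `F` is a vertex: nonempty with affine-hull dimension `0`. -/
def IsVertex {m : ℕ} (F : Set (Fin m → ℝ)) : Prop :=
  F.Nonempty ∧ setDim F = 0

/-- A global forward solution of the mass-action system `ẋ = Γ R(x)`. -/
def IsForwardSolution {m r : ℕ} (a b : Fin r → Fin m → ℕ) (k : Fin r → ℝ)
    (x : ℝ → Fin m → ℝ) : Prop :=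
  ∀ t : ℝ, 0 ≤ t → HasDerivAt x ((Gamma a b).mulVec (rate a k (x t))) t

/-- The ω-limit set of a forward trajectory. -/
def omegaLimitSet {m : ℕ} (x : ℝ → Fin m → ℝ) : Set (Fin m → ℝ) :=
  {y | MapClusterPt y atTop x}

/-- `R_i ≼_I R_j` : `α i l ≥ α j l` for all `l ∈ I`, strict for some `l ∈ I`. -/
def prec {m r : ℕ} (a : Fin r → Fin m → ℕ) (I : Set (Fin m)) (i j : Fin r) : Prop :=
  (∀ l ∈ I, a j l ≤ a i l) ∧ ∃ l ∈ I, a j l < a i l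

/-- `R_I = {(i,j) : R_i ≼_I R_j}`. -/
def precSet {m r : ℕ} (a : Fin r → Fin m → ℕ) (I : Set (Fin m)) : Set (Fin r × Fin r) :=
  {p | prec a I p.1 p.2}

/-- The feasibility cone relative to `J`. -/
def feasCone {r : ℕ} (J : Set (Fin r × Fin r)) (ε : ℝ) : Set (Fin r → ℝ) :=
  {v | (∀ i, 0 ≤ v i) ∧ ∀ p ∈ J, v p.1 ≤ ε * v p.2}

/-- The criticality cone `C(I)`. -/
def critCone {m r : ℕ} (a b : Fin r → Fin m → ℕ) (I : Set (Fin m)) : Set (Fin r → ℝ) :=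
  {v | (∀ i, 0 ≤ v i) ∧ ∀ l ∈ I, (Gamma a b).mulVec v l ≤ 0}

/-- `ker(I,J,ε)`. -/
def kerIJ {m r : ℕ} (a b : Fin r → Fin m → ℕ) (I : Set (Fin m))
    (J : Set (Fin r × Fin r)) (ε : ℝ) : Set (Fin r → ℝ) :=
  {v | (∀ i, 0 ≤ v i) ∧ (∀ l ∈ I, (Gamma a b).mulVec v l = 0) ∧ ∀ p ∈ J, v p.1 = ε * v p.2}

/-- Dynamical non-emptiability (Angeli–De Leenheer–Sontag): `F_ε(I) ∩ C(I) = {0}`. -/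
def DynNonEmptiable {m r : ℕ} (a b : Fin r → Fin m → ℕ) (I : Set (Fin m)) : Prop :=
  ∃ ε > (0:ℝ), critCone a b I ∩ feasCone (precSet a I) ε = {0}

/-- Weak dynamical non-emptiability: `C(I) ∩ F_ε(J) ⊆ ker(I,J,ε)` for some `ε > 0`, `J ⊆ R_I`. -/
def WeaklyDynNonEmptiable {m r : ℕ} (a b : Fin r → Fin m → ℕ) (I : Set (Fin m)) : Prop :=
  ∃ ε > (0:ℝ), ∃ J ⊆ precSet a I, critCone a b I ∩ feasCone J ε ⊆ kerIJ a b I J ε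

/-- `I` contains the support of a semi-conservation vector. -/
def ContainsSemiConsSupport {m r : ℕ} (a b : Fin r → Fin m → ℕ) (I : Set (Fin m)) : Prop :=
  ∃ c : Fin m → ℝ, (∀ i, 0 ≤ c i) ∧ (∃ i, 0 < c i) ∧
    Matrix.vecMul c (Gamma a b) = 0 ∧ ∀ i, 0 < c i → i ∈ I

/-- A semi-locking set is critical if it contains no support of a semi-conservation vector. -/
def IsCritical {m r : ℕ} (a b : Fin r → Fin m → ℕ) (I : Set (Fin m)) : Prop :=
  ¬ ContainsSemiConsSupport a b I

/-- Weak reversibility: in the directed reaction graph on complexes, the reactant complex of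
every reaction is reachable from its product complex (equivalently, every connected
component is strongly connected). -/
def WeaklyReversible {m r : ℕ} (a b : Fin r → Fin m → ℕ) : Prop :=
  ∀ i : Fin r,
    Relation.ReflTransGen (fun y z : Fin m → ℕ => ∃ i', a i' = y ∧ b i' = z) (b i) (a i)

/-- The system is conservative: `cᵀ Γ = 0` for some strictly positive `c`. -/
def Conservative {m r : ℕ} (a b : Fin r → Fin m → ℕ) : Prop :=
  ∃ c : Fin m → ℝ, (∀ i, 0 < c i) ∧ Matrix.vecMul c (Gamma a b) = 0

/-!
Let `y ∈ ω(x₀)` lie on the boundary and let `Z` be its zero set. Conservation laws are constant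
along the trajectory and on `ω(x₀)`, so the trajectory is bounded and `Z` is critical; a
reaction producing a species of `Z` without consuming one would push that species away from
`0` near `y`, so `Z` is semi-locking. Dynamical non-emptiability makes `Z` locking, and then the
absence of nested critical locking sets yields, for every `j ∉ Z`, a semi-conservation vector
supported on `Z ∪ {j}`, which keeps `x_j` near `y_j > 0` while `x` is near the face `x_Z = 0`.
There the reaction rates lie in the feasibility cone `F_ε(Z)`, and a separating functional dual
to `C(Z) ∩ F_ε(Z) = {0}` gives `μ ≥ 0`, positive exactly on `Z`, with `μ ⬝ᵥ x` nondecreasing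
near the face. Hence `μ ⬝ᵥ x` stays bounded away from `0`, contradicting `μ ⬝ᵥ y = 0`.
-/

open Set Finset Topology

lemma le_of_hasDerivAt_of_nonneg {f f' : ℝ → ℝ} {s t : ℝ} (hst : s ≤ t)
    (hf : ∀ u ∈ Icc s t, HasDerivAt f (f' u) u) (hf' : ∀ u ∈ Ioo s t, 0 ≤ f' u) :
    f s ≤ f t :=
  monotoneOn_of_hasDerivWithinAt_nonneg (convex_Icc s t)
    (fun u hu => (hf u hu).continuousAt.continuousWithinAt)
    (fun u hu => (hf u (interior_subset hu)).hasDerivWithinAt)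
    (fun u hu => hf' u (by rwa [interior_Icc] at hu))
    (left_mem_Icc.2 hst) (right_mem_Icc.2 hst) hst

lemma le_exp_mul_of_neg_mul_le_deriv {f f' : ℝ → ℝ} {C T : ℝ} (hT : 0 ≤ T)
    (hf : ∀ t ∈ Icc 0 T, HasDerivAt f (f' t) t) (hf' : ∀ t ∈ Icc 0 T, -(C * f t) ≤ f' t) :
    f 0 ≤ Real.exp (C * T) * f T := by
  have key := le_of_hasDerivAt_of_nonneg (f := fun t => Real.exp (C * t) * f t) hT
    (fun t ht => (((hasDerivAt_id t).const_mul C).exp).mul (hf t ht)) fun t ht => by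
      have h := mul_nonneg (Real.exp_pos (C * t)).le
        (by linarith [hf' t (Ioo_subset_Icc_self ht)] : 0 ≤ f' t + C * f t)
      simp only [id]
      linarith
  simpa using key

lemma min_le_of_hasDerivAt_nonneg_below {P P' : ℝ → ℝ} {ρ : ℝ}
    (hP : ∀ t, 0 ≤ t → HasDerivAt P (P' t) t) (hP' : ∀ t, 0 ≤ t → P t < ρ → 0 ≤ P' t) :
    ∀ t, 0 ≤ t → min ρ (P 0) ≤ P t := by
  intro t ht
  by_contra! hlt
  set A := Icc 0 t ∩ P ⁻¹' Ici (min ρ (P 0))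
  have hA : IsClosed A := ContinuousOn.preimage_isClosed_of_isClosed
    (fun u hu => (hP u hu.1).continuousAt.continuousWithinAt) isClosed_Icc isClosed_Ici
  have hbdd : BddAbove A := ⟨t, fun u hu => hu.1.2⟩
  have h0A : (0 : ℝ) ∈ A := ⟨left_mem_Icc.2 ht, min_le_right ρ (P 0)⟩
  obtain ⟨⟨hs0, hst⟩, hsP⟩ : sSup A ∈ A := hA.csSup_mem ⟨0, h0A⟩ hbdd
  have hafter : ∀ u ∈ Ioo (sSup A) t, P u < min ρ (P 0) := fun u hu => by
    by_contra! h
    exact hu.1.not_ge (le_csSup hbdd ⟨⟨hs0.trans hu.1.le, hu.2.le⟩, h⟩)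
  have := le_of_hasDerivAt_of_nonneg hst (fun u hu => hP u (hs0.trans hu.1))
    fun u hu => hP' u (hs0.trans hu.1.le) ((hafter u hu).trans_le (min_le_left _ _))
  exact (hsP.trans this).not_gt hlt

section Rates

variable {m r : ℕ} {a b : Fin r → Fin m → ℕ} {k : Fin r → ℝ}

lemma continuous_rate (a : Fin r → Fin m → ℕ) (k : Fin r → ℝ) : Continuous (rate a k) :=
  continuous_pi fun _ =>
    continuous_const.mul (continuous_finsetProd _ fun j _ => (continuous_apply j).pow _)

lemma rate_nonneg (hk : ∀ i, 0 < k i) {z : Fin m → ℝ} (hz : ∀ j, 0 ≤ z j) (i : Fin r) :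
    0 ≤ rate a k z i :=
  mul_nonneg (hk i).le (prod_nonneg fun j _ => pow_nonneg (hz j) _)

lemma rate_le_of_pos (hk : ∀ i, 0 < k i) {M : ℝ} (hM : 1 ≤ M) {z : Fin m → ℝ}
    (hz : ∀ j, 0 ≤ z j) (hzM : ∀ j, z j ≤ M) {i : Fin r} {j : Fin m} (hij : 0 < a i j) :
    rate a k z i ≤ k i * M ^ (∑ l, a i l) * z j := by
  have hfactor : ∀ l, z l ^ a i l ≤ (if l = j then z j else 1) * M ^ a i l := by
    intro l
    split_ifs with hl
    · subst hl
      calc z l ^ a i l = z l * z l ^ (a i l - 1) := by rw [← pow_succ', Nat.sub_add_cancel hij]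
        _ ≤ z l * M ^ a i l := mul_le_mul_of_nonneg_left
            ((pow_le_pow_left₀ (hz l) (hzM l) _).trans (pow_le_pow_right₀ hM (Nat.sub_le _ _)))
            (hz l)
    · rw [one_mul]
      exact pow_le_pow_left₀ (hz l) (hzM l) _
  calc rate a k z i = k i * ∏ l, z l ^ a i l := rfl
    _ ≤ k i * ∏ l, (if l = j then z j else 1) * M ^ a i l :=
        mul_le_mul_of_nonneg_left
          (prod_le_prod (fun l _ => pow_nonneg (hz l) _) fun l _ => hfactor l) (hk i).le
    _ = k i * M ^ (∑ l, a i l) * z j := by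
        rw [prod_mul_distrib, prod_ite_eq', prod_pow_eq_pow_sum, if_pos (Finset.mem_univ j)]
        ring

lemma neg_mul_le_gamma_mul_rate (hk : ∀ i, 0 < k i) {M : ℝ} (hM : 1 ≤ M) {z : Fin m → ℝ}
    (hz : ∀ j, 0 ≤ z j) (hzM : ∀ j, z j ≤ M) (i : Fin r) (j : Fin m) :
    -(a i j * (k i * M ^ (∑ l, a i l)) * z j) ≤ Gamma a b j i * rate a k z i := by
  have hR := rate_nonneg (a := a) hk hz i
  rcases Nat.eq_zero_or_pos (a i j) with h | h
  · simp only [Gamma, h, Nat.cast_zero, zero_mul, neg_zero, sub_zero]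
    positivity
  · have hle := rate_le_of_pos hk hM hz hzM h
    have hΓ : -(a i j : ℝ) ≤ Gamma a b j i := by simp [Gamma]
    nlinarith [mul_nonneg (by linarith : 0 ≤ Gamma a b j i + a i j) hR,
      mul_nonneg (Nat.cast_nonneg (a i j) : (0 : ℝ) ≤ a i j) (by linarith : 0 ≤
        k i * M ^ (∑ l, a i l) * z j - rate a k z i)]

lemma exists_neg_mul_le_mulVec_rate (hk : ∀ i, 0 < k i) (M : ℝ) (j : Fin m) :
    ∃ C, ∀ z : Fin m → ℝ, (∀ l, 0 ≤ z l) → (∀ l, z l ≤ M) →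
      -(C * z j) ≤ (Gamma a b *ᵥ rate a k z) j := by
  refine ⟨∑ i, a i j * (k i * max 1 M ^ ∑ l, a i l), fun z hz hzM => ?_⟩
  rw [sum_mul, ← sum_neg_distrib]
  exact sum_le_sum fun i _ => neg_mul_le_gamma_mul_rate hk (le_max_left 1 M) hz
    (fun l => (hzM l).trans (le_max_right 1 M)) i j

lemma exists_rate_sub_mul_le_mulVec_rate (hk : ∀ i, 0 < k i) (M : ℝ) {i : Fin r} {j : Fin m}
    (ha : a i j = 0) (hb : 0 < b i j) :
    ∃ C, 0 ≤ C ∧ ∀ z : Fin m → ℝ, (∀ l, 0 ≤ z l) → (∀ l, z l ≤ M) →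
      rate a k z i - C * z j ≤ (Gamma a b *ᵥ rate a k z) j := by
  set c : Fin r → ℝ := fun i' => a i' j * (k i' * max 1 M ^ ∑ l, a i' l)
  have hc : ∀ i', 0 ≤ c i' := fun i' =>
    mul_nonneg (Nat.cast_nonneg _) (mul_nonneg (hk i').le (pow_nonneg (by positivity) _))
  refine ⟨∑ i', c i', sum_nonneg fun i' _ => hc i', fun z hz hzM => ?_⟩
  have hterm : ∀ i', -(c i' * z j) ≤ Gamma a b j i' * rate a k z i' := fun i' =>
    neg_mul_le_gamma_mul_rate hk (le_max_left 1 M) hz (fun l => (hzM l).trans (le_max_right 1 M))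
      i' j
  have hΓ : 1 ≤ Gamma a b j i := by simp [Gamma, ha]; exact_mod_cast hb
  have hrest : -(∑ i' ∈ univ.erase i, c i' * z j) ≤
      ∑ i' ∈ univ.erase i, Gamma a b j i' * rate a k z i' := by
    rw [← sum_neg_distrib]
    exact sum_le_sum fun i' _ => hterm i'
  have hci : c i = 0 := by simp [c, ha]
  change _ ≤ ∑ i', Gamma a b j i' * rate a k z i'
  rw [sum_mul, ← add_sum_erase _ _ (Finset.mem_univ i), ← add_sum_erase _ _ (Finset.mem_univ i),
    hci]
  nlinarith [rate_nonneg (a := a) hk hz i]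

lemma exists_eventually_lt_rate (hk : ∀ i, 0 < k i) {y : Fin m → ℝ} (hy0 : ∀ l, 0 ≤ y l)
    {i : Fin r} (ha : ∀ l, y l = 0 → a i l = 0) : ∃ ρ > 0, ∀ᶠ z in 𝓝 y, ρ < rate a k z i := by
  have hR : 0 < rate a k y i := mul_pos (hk i) <| prod_pos fun l _ => by
    by_cases hl : y l = 0
    · simp [ha l hl]
    · exact pow_pos ((hy0 l).lt_of_ne' hl) _
  exact ⟨rate a k y i / 2, half_pos hR, continuousAt_const.eventually_lt
    ((continuous_apply i).comp (continuous_rate a k)).continuousAt (half_lt_self hR)⟩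

end Rates

namespace IsForwardSolution

variable {m r : ℕ} {a b : Fin r → Fin m → ℕ} {k : Fin r → ℝ} {x : ℝ → Fin m → ℝ}
  {y : Fin m → ℝ}

lemma continuousOn (hx : IsForwardSolution a b k x) : ContinuousOn x (Ici 0) :=
  fun t ht => (hx t ht).continuousAt.continuousWithinAt

lemma hasDerivAt_apply (hx : IsForwardSolution a b k x) (j : Fin m) {t : ℝ} (ht : 0 ≤ t) :
    HasDerivAt (fun s => x s j) ((Gamma a b *ᵥ rate a k (x t)) j) t :=
  hasDerivAt_pi.1 (hx t ht) j

lemma hasDerivAt_dotProduct (hx : IsForwardSolution a b k x) (μ : Fin m → ℝ) {t : ℝ}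
    (ht : 0 ≤ t) :
    HasDerivAt (fun s => μ ⬝ᵥ x s) ((μ ᵥ* Gamma a b) ⬝ᵥ rate a k (x t)) t := by
  rw [← dotProduct_mulVec]
  exact HasDerivAt.fun_sum fun j _ => (hx.hasDerivAt_apply j ht).const_mul (μ j)

/-- Up to the first time `T₁` at which a coordinate vanishes, all coordinates are nonnegative,
so each one decays at most exponentially on `[0, T₁]`. -/
theorem pos (hk : ∀ i, 0 < k i) (hx : IsForwardSolution a b k x) (h0 : ∀ j, 0 < x 0 j) :
    ∀ t, 0 ≤ t → ∀ j, 0 < x t j := by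
  by_contra! ⟨T, hT, j₁, hj₁⟩
  set A := Icc 0 T ∩ x ⁻¹' (Set.univ.pi fun _ => Ioi 0)ᶜ
  have hA : IsClosed A := (hx.continuousOn.mono Icc_subset_Ici_self).preimage_isClosed_of_isClosed
    isClosed_Icc (isOpen_set_pi Set.finite_univ fun _ _ => isOpen_Ioi).isClosed_compl
  have hbdd : BddBelow A := ⟨0, fun t ht => ht.1.1⟩
  have hTA : T ∈ A := ⟨⟨hT, le_rfl⟩, fun h => (h j₁ (Set.mem_univ _)).not_ge hj₁⟩
  obtain ⟨⟨hT₁0, hT₁T⟩, hT₁⟩ : sInf A ∈ A := hA.csInf_mem ⟨T, hTA⟩ hbdd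
  have hbefore : ∀ t ∈ Ico 0 (sInf A), ∀ j, 0 < x t j := fun t ht => by
    by_contra hneg
    exact ht.2.not_ge (csInf_le hbdd
      ⟨⟨ht.1, ht.2.le.trans hT₁T⟩, fun h => hneg fun j => h j (Set.mem_univ _)⟩)
  have hT₁pos : 0 < sInf A := hT₁0.lt_of_ne fun h => hT₁ (h ▸ fun j _ => h0 j)
  have hnonneg : ∀ t ∈ Icc 0 (sInf A), ∀ j, 0 ≤ x t j := by
    rintro t ⟨ht0, htT₁⟩ j
    rcases htT₁.lt_or_eq with h | h
    · exact (hbefore t ⟨ht0, h⟩ j).le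
    · refine ge_of_tendsto (x := nhdsWithin t (Iio t))
        ((hx.hasDerivAt_apply j ht0).continuousAt.tendsto.mono_left nhdsWithin_le_nhds) ?_
      filter_upwards [Ioo_mem_nhdsLT (h ▸ hT₁pos)] with s hs
      exact (hbefore s ⟨hs.1.le, h ▸ hs.2⟩ j).le
  obtain ⟨M, hM⟩ :=
    isCompact_Icc.exists_bound_of_continuousOn
      (hx.continuousOn.mono (Icc_subset_Ici_self : Icc 0 (sInf A) ⊆ Ici 0))
  refine hT₁ fun j _ => ?_
  obtain ⟨C, hC⟩ := exists_neg_mul_le_mulVec_rate (b := b) hk M j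
  have hexp := le_exp_mul_of_neg_mul_le_deriv hT₁0 (fun t ht => hx.hasDerivAt_apply j ht.1)
    fun t ht => hC _ (hnonneg t ht) fun l =>
      (le_abs_self _).trans ((norm_le_pi_norm (x t) l).trans (hM t ht))
  exact pos_of_mul_pos_right ((h0 j).trans_le hexp) (Real.exp_pos _).le

lemma dotProduct_eq (hx : IsForwardSolution a b k x) {c : Fin m → ℝ}
    (hc : c ᵥ* Gamma a b = 0) : ∀ t, 0 ≤ t → c ⬝ᵥ x t = c ⬝ᵥ x 0 := fun t ht =>
  constant_of_has_deriv_right_zero (f := fun s => c ⬝ᵥ x s)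
    (fun s hs => (hx.hasDerivAt_dotProduct c hs.1).continuousAt.continuousWithinAt)
    (fun s hs => by simpa [hc] using (hx.hasDerivAt_dotProduct c hs.1).hasDerivWithinAt)
    t ⟨ht, le_rfl⟩

lemma dotProduct_eq_of_mapClusterPt (hx : IsForwardSolution a b k x) {c : Fin m → ℝ}
    (hc : c ᵥ* Gamma a b = 0) (hy : MapClusterPt y atTop x) : c ⬝ᵥ y = c ⬝ᵥ x 0 :=
  (isClosed_eq (continuous_const.dotProduct continuous_id) continuous_const).mem_of_mapClusterPt
    hy ((eventually_ge_atTop 0).mono (hx.dotProduct_eq hc))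

lemma exists_bound (hx : IsForwardSolution a b k x) (hcons : Conservative a b)
    (hpos : ∀ t, 0 ≤ t → ∀ j, 0 < x t j) : ∃ M, ∀ t, 0 ≤ t → ∀ j, x t j ≤ M := by
  obtain ⟨c, hc0, hc⟩ := hcons
  obtain ⟨M, hM⟩ := Finite.exists_le fun j => (c ⬝ᵥ x 0) / c j
  refine ⟨M, fun t ht j => le_trans ((le_div_iff₀' (hc0 j)).2 ?_) (hM j)⟩
  rw [← hx.dotProduct_eq hc t ht]
  exact single_le_sum (fun l _ => mul_nonneg (hc0 l).le (hpos t ht l).le) (Finset.mem_univ j)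

lemma isCritical_zeroSet (hx : IsForwardSolution a b k x) (h0 : ∀ j, 0 < x 0 j)
    (hy : MapClusterPt y atTop x) : IsCritical a b {j | y j = 0} := by
  rintro ⟨c, hc0, ⟨l, hl⟩, hc, hsupp⟩
  have hcy : c ⬝ᵥ y = 0 := sum_eq_zero fun j _ => by
    rcases (hc0 j).lt_or_eq with h | h
    · rw [show y j = 0 from hsupp j h, mul_zero]
    · rw [← h, zero_mul]
  have hcx : 0 < c ⬝ᵥ x 0 := (mul_pos hl (h0 l)).trans_le
    (single_le_sum (fun j _ => mul_nonneg (hc0 j) (h0 j).le) (Finset.mem_univ l))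
  linarith [hx.dotProduct_eq_of_mapClusterPt hc hy]

lemma exists_lipschitz (hx : IsForwardSolution a b k x) (hpos : ∀ t, 0 ≤ t → ∀ j, 0 < x t j)
    {M : ℝ} (hxM : ∀ t, 0 ≤ t → ∀ j, x t j ≤ M) :
    ∃ B, 0 ≤ B ∧ ∀ s t, 0 ≤ s → s ≤ t → ‖x t - x s‖ ≤ B * (t - s) := by
  have hf : Continuous fun z : Fin m → ℝ => Gamma a b *ᵥ rate a k z :=
    continuous_const.matrix_mulVec (continuous_rate a k)
  obtain ⟨B, hB⟩ := IsCompact.exists_bound_of_continuousOn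
    (isCompact_Icc (a := (0 : Fin m → ℝ)) (b := fun _ => M)) hf.continuousOn
  refine ⟨max B 0, le_max_right _ _, fun s t hs hst =>
    norm_image_sub_le_of_norm_deriv_le_segment'
      (fun u hu => (hx u (hs.trans hu.1)).hasDerivWithinAt)
      (fun u hu => (hB _ ⟨fun j => (hpos u (hs.trans hu.1) j).le, hxM u (hs.trans hu.1)⟩).trans
        (le_max_left _ _)) t ⟨hst, le_rfl⟩⟩

/-- Reaction `i` runs at a rate bounded below near `y`, so `x_j` grows by a definite amount on
every time interval spent near `y`, which is incompatible with `x_j` coming close to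
`y_j = 0`. -/
lemma false_of_produced_at_zero (hx : IsForwardSolution a b k x) (hk : ∀ i, 0 < k i)
    (hpos : ∀ t, 0 ≤ t → ∀ j, 0 < x t j) {M : ℝ} (hxM : ∀ t, 0 ≤ t → ∀ j, x t j ≤ M)
    (hy : MapClusterPt y atTop x) (hy0 : ∀ l, 0 ≤ y l) {i : Fin r} {j : Fin m} (hyj : y j = 0)
    (hb : 0 < b i j) (ha : ∀ l, y l = 0 → a i l = 0) : False := by
  obtain ⟨ρ, hρ, hnear⟩ := exists_eventually_lt_rate hk hy0 ha
  obtain ⟨η, hη, hnear⟩ := Metric.eventually_nhds_iff.1 hnear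
  obtain ⟨C, hC0, hC⟩ := exists_rate_sub_mul_le_mulVec_rate (k := k) hk M (ha j hyj) hb
  obtain ⟨B, hB0, hlip⟩ := hx.exists_lipschitz hpos hxM
  obtain ⟨D₁, hD₁, hCD₁⟩ := exists_pos_mul_lt (half_pos hρ) C
  obtain ⟨D, hD, hDη, hDD₁⟩ : ∃ D > 0, D ≤ η ∧ D ≤ D₁ :=
    ⟨min η D₁, lt_min hη hD₁, min_le_left _ _, min_le_right _ _⟩
  obtain ⟨τ, hτ, hBτ⟩ := exists_pos_mul_lt (half_pos hD) B
  obtain ⟨ε, hε, hεD, hερ⟩ : ∃ ε > 0, ε ≤ D / 2 ∧ ε ≤ ρ * τ / 2 :=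
    ⟨min (D / 2) (ρ * τ / 2), lt_min (half_pos hD) (by positivity), min_le_left _ _,
      min_le_right _ _⟩
  obtain ⟨t₁, hyt₁, hτt₁⟩ := ((hy.frequently (Metric.ball_mem_nhds y hε)).and_eventually
    (eventually_ge_atTop τ)).exists
  have hclose : ∀ u ∈ Icc (t₁ - τ) t₁, dist (x u) y < D := fun u hu => calc
    dist (x u) y ≤ ‖x t₁ - x u‖ + dist (x t₁) y := by
        rw [dist_eq_norm, dist_eq_norm, norm_sub_rev (x t₁)]
        exact norm_sub_le_norm_sub_add_norm_sub _ _ _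
    _ < B * τ + ε := add_lt_add_of_le_of_lt ((hlip u t₁ (by linarith [hu.1]) hu.2).trans
        (mul_le_mul_of_nonneg_left (by linarith [hu.1]) hB0)) hyt₁
    _ ≤ D := by linarith
  have hcoord : ∀ u, dist (x u) y < D → x u j < D := fun u hu => by
    simpa [hyj] using (le_abs_self _).trans_lt ((dist_le_pi_dist (x u) y j).trans_lt hu)
  have hgrowth : ∀ u ∈ Icc (t₁ - τ) t₁, ρ / 2 ≤ (Gamma a b *ᵥ rate a k (x u)) j := by
    intro u hu
    have hu0 : 0 ≤ u := by linarith [hu.1]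
    have h1 := hnear ((hclose u hu).trans_le hDη)
    have h2 := mul_le_mul_of_nonneg_left ((hcoord u (hclose u hu)).le.trans hDD₁) hC0
    linarith [hC (x u) (fun l => (hpos u hu0 l).le) (hxM u hu0)]
  have hincr := le_of_hasDerivAt_of_nonneg (f := fun u => x u j - ρ / 2 * u)
    (by linarith : t₁ - τ ≤ t₁)
    (fun u hu => (hx.hasDerivAt_apply j (by linarith [hu.1])).sub ((hasDerivAt_id u).const_mul _))
    fun u hu => by simpa using hgrowth u (Ioo_subset_Icc_self hu)
  have hsmall : x t₁ j < ε := by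
    simpa [hyj] using (le_abs_self _).trans_lt ((dist_le_pi_dist (x t₁) y j).trans_lt hyt₁)
  have := hpos (t₁ - τ) (by linarith) j
  linarith

lemma isSemiLocking_zeroSet (hx : IsForwardSolution a b k x) (hk : ∀ i, 0 < k i)
    (hpos : ∀ t, 0 ≤ t → ∀ j, 0 < x t j) {M : ℝ} (hxM : ∀ t, 0 ≤ t → ∀ j, x t j ≤ M)
    (hy : MapClusterPt y atTop x) (hy0 : ∀ l, 0 ≤ y l) (hne : ∃ j, y j = 0) :
    IsSemiLocking a b {j | y j = 0} := by
  refine ⟨hne, fun i ⟨j, hj, hb⟩ => ?_⟩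
  by_contra! hcons
  exact hx.false_of_produced_at_zero hk hpos hxM hy hy0 hj hb fun l hl => Nat.le_zero.1 (hcons l hl)

end IsForwardSolution

section Locking

variable {m r : ℕ} {a b : Fin r → Fin m → ℕ}

/-- The reactions consuming nothing in `I` form a vector of the criticality cone (a semi-locking
set is not produced by them) which is feasible (they are never `≼_I`-above another reaction). -/
lemma IsSemiLocking.isLocking {I : Set (Fin m)} (hI : IsSemiLocking a b I)
    (hdne : DynNonEmptiable a b I) : IsLocking a I := by
  classical
  obtain ⟨ε, hε, hcone⟩ := hdne
  refine ⟨hI.1, fun i => ?_⟩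
  by_contra! hi
  set v : Fin r → ℝ := fun i' => if ∀ l ∈ I, a i' l = 0 then 1 else 0
  have hv0 : ∀ i', 0 ≤ v i' := fun i' => by simp only [v]; split_ifs <;> norm_num
  have hcrit : v ∈ critCone a b I := ⟨hv0, fun l hl => le_of_eq (sum_eq_zero fun i' _ => by
    simp only [v]
    split_ifs with h
    · have hb : b i' l = 0 := by
        by_contra hb
        obtain ⟨l', hl', hcons⟩ := hI.2 i' ⟨l, hl, Nat.pos_of_ne_zero hb⟩
        exact hcons.ne' (h l' hl')
      simp [Gamma, hb, h l hl]
    · simp : ∑ i', Gamma a b l i' * v i' = 0)⟩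
  have hfeas : v ∈ feasCone (precSet a I) ε := ⟨hv0, fun p ⟨_, l, hl, hlt⟩ => by
    have hv₁ : v p.1 = 0 := if_neg fun h => by have := h l hl; omega
    rw [hv₁]
    exact mul_nonneg hε.le (hv0 p.2)⟩
  have hv : v ∈ ({0} : Set (Fin r → ℝ)) := hcone ▸ ⟨hcrit, hfeas⟩
  have hvi : v i = 1 := if_pos fun l hl => Nat.le_zero.1 (hi l hl)
  exact one_ne_zero (hvi.symm.trans (congrFun (Set.mem_singleton_iff.1 hv) i))

lemma exists_semiCons_insert
    (hnest : ¬ ∃ I₁ I₂ : Set (Fin m), IsLocking a I₁ ∧ IsCritical a b I₁ ∧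
      IsLocking a I₂ ∧ IsCritical a b I₂ ∧ I₁ ⊂ I₂)
    {I : Set (Fin m)} (hlock : IsLocking a I) (hcrit : IsCritical a b I) {j : Fin m}
    (hj : j ∉ I) :
    ∃ c : Fin m → ℝ, (∀ l, 0 ≤ c l) ∧ 0 < c j ∧ c ᵥ* Gamma a b = 0 ∧
      ∀ l, 0 < c l → l ∈ insert j I := by
  have hlock' : IsLocking a (insert j I) :=
    ⟨Set.insert_nonempty j I, fun i =>
      (hlock.2 i).imp fun l hl => ⟨Set.mem_insert_of_mem j hl.1, hl.2⟩⟩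
  have hnc : ¬ IsCritical a b (insert j I) := fun hcrit' =>
    hnest ⟨I, _, hlock, hcrit, hlock', hcrit', Set.ssubset_insert hj⟩
  obtain ⟨c, hc0, hex, hc, hsupp⟩ := not_not.1 hnc
  refine ⟨c, hc0, (hc0 j).lt_of_ne' fun hcj => hcrit ⟨c, hc0, hex, hc, fun l hl => ?_⟩, hc, hsupp⟩
  exact (Set.mem_insert_iff.1 (hsupp l hl)).resolve_left (by rintro rfl; exact hl.ne' hcj)

end Locking

section NearFace

variable {m r : ℕ} {a b : Fin r → Fin m → ℕ} {k : Fin r → ℝ} {y : Fin m → ℝ}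

/-- The ratio of the two rates is bounded by a polynomial in `ρ` without constant term: the
factor `c ρ j` compares the `j`-th factors of the two monomials. -/
lemma eventually_rate_le_mul_rate (hk : ∀ i, 0 < k i) (hy0 : ∀ j, 0 ≤ y j) {M ε : ℝ}
    (hε : 0 < ε) {i i' : Fin r} (hp : prec a {j | y j = 0} i i') :
    ∀ᶠ ρ in 𝓝[>] 0, ∀ z : Fin m → ℝ, (∀ j, 0 ≤ z j) → (∀ j, z j ≤ M) →
      (∀ j, y j = 0 → z j ≤ ρ) → (∀ j, y j ≠ 0 → y j / 2 ≤ z j) →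
      rate a k z i ≤ ε * rate a k z i' := by
  obtain ⟨hle, l, hl, hlt⟩ := hp
  set c : ℝ → Fin m → ℝ := fun ρ j =>
    if y j = 0 then ρ ^ (a i j - a i' j) else M ^ a i j / (y j / 2) ^ a i' j
  have hcont : Continuous fun ρ => k i / k i' * ∏ j, c ρ j :=
    continuous_const.mul <| continuous_finsetProd _ fun j _ => by
      by_cases hj : y j = 0 <;> simp only [c, hj, if_true, if_false] <;> fun_prop
  have hc0 : k i / k i' * ∏ j, c 0 j = 0 := by
    rw [prod_eq_zero (Finset.mem_univ l) (by simp [c, show y l = 0 from hl]; omega),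
      mul_zero]
  filter_upwards [((hcont.tendsto' 0 0 hc0).mono_left nhdsWithin_le_nhds).eventually
    (gt_mem_nhds hε)] with ρ hρ z hz hzM hzZ hzY
  have hfactor : ∀ j, z j ^ a i j ≤ c ρ j * z j ^ a i' j := by
    intro j
    by_cases hj : y j = 0
    · simp only [c, hj, if_true]
      calc z j ^ a i j = z j ^ (a i j - a i' j) * z j ^ a i' j := by
            rw [← pow_add, Nat.sub_add_cancel (hle j hj)]
        _ ≤ ρ ^ (a i j - a i' j) * z j ^ a i' j := mul_le_mul_of_nonneg_right
            (pow_le_pow_left₀ (hz j) (hzZ j hj) _) (pow_nonneg (hz j) _)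
    · have hyj : 0 < y j / 2 := half_pos ((hy0 j).lt_of_ne' hj)
      simp only [c, hj, if_false]
      calc z j ^ a i j ≤ M ^ a i j := pow_le_pow_left₀ (hz j) (hzM j) _
        _ = M ^ a i j / (y j / 2) ^ a i' j * (y j / 2) ^ a i' j :=
            (div_mul_cancel₀ _ (pow_pos hyj _).ne').symm
        _ ≤ M ^ a i j / (y j / 2) ^ a i' j * z j ^ a i' j := mul_le_mul_of_nonneg_left
            (pow_le_pow_left₀ hyj.le (hzY j hj) _)
            (div_nonneg (pow_nonneg ((hz j).trans (hzM j)) _) (pow_pos hyj _).le)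
  calc rate a k z i = k i * ∏ j, z j ^ a i j := rfl
    _ ≤ k i * ∏ j, c ρ j * z j ^ a i' j := mul_le_mul_of_nonneg_left
        (prod_le_prod (fun j _ => pow_nonneg (hz j) _) fun j _ => hfactor j) (hk i).le
    _ = (k i / k i' * ∏ j, c ρ j) * rate a k z i' := by
        rw [prod_mul_distrib, rate]
        field_simp [(hk i').ne']
    _ ≤ ε * rate a k z i' := mul_le_mul_of_nonneg_right hρ.le (rate_nonneg hk hz i')

lemma eventually_rate_mem_feasCone (hk : ∀ i, 0 < k i) (hy0 : ∀ j, 0 ≤ y j) (M : ℝ) {ε : ℝ}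
    (hε : 0 < ε) :
    ∀ᶠ ρ in 𝓝[>] 0, ∀ z : Fin m → ℝ, (∀ j, 0 ≤ z j) → (∀ j, z j ≤ M) →
      (∀ j, y j = 0 → z j ≤ ρ) → (∀ j, y j ≠ 0 → y j / 2 ≤ z j) →
      rate a k z ∈ feasCone (precSet a {j | y j = 0}) ε := by
  have hpair : ∀ p : Fin r × Fin r, ∀ᶠ ρ in 𝓝[>] 0, p ∈ precSet a {j | y j = 0} →
      ∀ z : Fin m → ℝ, (∀ j, 0 ≤ z j) → (∀ j, z j ≤ M) →
        (∀ j, y j = 0 → z j ≤ ρ) → (∀ j, y j ≠ 0 → y j / 2 ≤ z j) →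
        rate a k z p.1 ≤ ε * rate a k z p.2 := fun p => by
    by_cases hp : p ∈ precSet a {j | y j = 0}
    · exact (eventually_rate_le_mul_rate hk hy0 hε hp).mono fun ρ h _ => h
    · exact Eventually.of_forall fun ρ h => absurd h hp
  filter_upwards [eventually_all.2 hpair] with ρ hρ z hz hzM hzZ hzY
  exact ⟨rate_nonneg hk hz, fun p hp => hρ p hp z hz hzM hzZ hzY⟩

end NearFace

section Certificate

variable {n : ℕ}

lemma exists_dotProduct_of_bddAbove_nonposOn {I : Set (Fin n)} (f : StrongDual ℝ (Fin n → ℝ))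
    {u : ℝ} (hf : ∀ w : Fin n → ℝ, (∀ l ∈ I, w l ≤ 0) → f w < u) :
    ∃ ν : Fin n → ℝ, (∀ l ∈ I, 0 ≤ ν l) ∧ (∀ l ∉ I, ν l = 0) ∧ ∀ w, f w = ν ⬝ᵥ w := by
  have hu : 0 < u := by simpa using hf 0 (by simp)
  have hf' : ∀ w : Fin n → ℝ, (∀ l ∈ I, w l ≤ 0) → f w ≤ 0 := fun w hw => by
    by_contra! hfw
    have := hf ((u / f w) • w) fun l hl => by
      simpa using mul_nonpos_of_nonneg_of_nonpos (div_pos hu hfw).le (hw l hl)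
    rw [map_smul, smul_eq_mul, div_mul_cancel₀ _ hfw.ne'] at this
    exact this.false
  have hsingle : ∀ l (s : ℝ), l ∉ I ∨ s ≤ 0 → f (Pi.single l s) ≤ 0 := fun l s h =>
    hf' _ fun l' hl' => by
      rcases eq_or_ne l' l with rfl | hll
      · simpa using h.resolve_left (not_not.2 hl')
      · simp [Pi.single_eq_of_ne hll]
  refine ⟨fun l => f (Pi.single l 1), fun l hl => ?_, fun l hl => ?_, fun w => ?_⟩
  · simpa [Pi.single_neg] using hsingle l (-1) (Or.inr (by norm_num))
  · exact le_antisymm (hsingle l 1 (Or.inl hl))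
      (by simpa [Pi.single_neg] using hsingle l (-1) (Or.inl hl))
  · rw [dotProduct_comm]
    refine (LinearMap.pi_apply_eq_sum_univ f.toLinearMap w).trans (sum_congr rfl fun l _ => ?_)
    have : (fun j => if l = j then (1 : ℝ) else 0) = Pi.single l 1 := by
      funext j; simp [Pi.single_apply, eq_comm]
    simp [this]

lemma exists_nonneg_dotProduct_gt {I : Set (Fin n)} {K : Set (Fin n → ℝ)} (hK : Convex ℝ K)
    (hKc : IsCompact K) (hKI : ∀ w ∈ K, ∃ l ∈ I, 0 < w l) :
    ∃ ν : Fin n → ℝ, (∀ l ∈ I, 0 ≤ ν l) ∧ (∀ l ∉ I, ν l = 0) ∧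
      ∃ v > 0, ∀ w ∈ K, v < ν ⬝ᵥ w := by
  set N : Set (Fin n → ℝ) := ⋂ l ∈ I, {w | w l ≤ 0}
  have hmemN : ∀ w, w ∈ N ↔ ∀ l ∈ I, w l ≤ 0 := fun w => by simp [N]
  have hN : Convex ℝ N :=
    convex_iInter₂ fun l _ => convex_halfSpace_le (LinearMap.proj (R := ℝ) l).isLinear 0
  have hNc : IsClosed N :=
    isClosed_biInter fun l _ => isClosed_le (continuous_apply l) continuous_const
  have hdisj : Disjoint N K := Set.disjoint_left.2 fun w hwN hwK => by
    obtain ⟨l, hl, h⟩ := hKI w hwK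
    exact ((hmemN w).1 hwN l hl).not_gt h
  obtain ⟨f, u, v, hfN, huv, hfK⟩ := geometric_hahn_banach_closed_compact hN hNc hK hKc hdisj
  obtain ⟨ν, hνI, hν0, hfν⟩ :=
    exists_dotProduct_of_bddAbove_nonposOn f fun w hw => hfN w ((hmemN w).2 hw)
  refine ⟨ν, hνI, hν0, v, ?_, fun w hw => hfν w ▸ hfK w hw⟩
  exact (by simpa using hfN 0 ((hmemN 0).2 fun _ _ => le_rfl) : 0 < u).trans huv

/-- Perturbing a separating functional by a small multiple of the indicator of `I` makes it
strictly positive on `I`; rescaling normalises it. -/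
lemma exists_certificate_of_isCompact {I : Set (Fin n)} {K : Set (Fin n → ℝ)} (hK : Convex ℝ K)
    (hKc : IsCompact K) (hKI : ∀ w ∈ K, ∃ l ∈ I, 0 < w l) :
    ∃ μ : Fin n → ℝ, (∀ l ∈ I, 1 ≤ μ l) ∧ (∀ l ∉ I, μ l = 0) ∧ ∀ w ∈ K, 0 < μ ⬝ᵥ w := by
  classical
  obtain ⟨ν, hνI, hν0, v, hv, hνK⟩ := exists_nonneg_dotProduct_gt hK hKc hKI
  set e : Fin n → ℝ := fun l => if l ∈ I then 1 else 0
  have he : Continuous fun w : Fin n → ℝ => e ⬝ᵥ w := continuous_const.dotProduct continuous_id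
  obtain ⟨B, hB⟩ := hKc.exists_bound_of_continuousOn he.continuousOn
  obtain ⟨s, hs, hBs⟩ := exists_pos_mul_lt hv B
  refine ⟨s⁻¹ • ν + e, fun l hl => ?_, fun l hl => ?_, fun w hw => ?_⟩
  · simpa [e, hl] using mul_nonneg (inv_nonneg.2 hs.le) (hνI l hl)
  · simp [e, hl, hν0 l hl]
  · have hew : -B ≤ e ⬝ᵥ w := neg_le_of_abs_le ((Real.norm_eq_abs _).symm.trans_le (hB w hw))
    rw [add_dotProduct, smul_dotProduct, smul_eq_mul]
    have : B < s⁻¹ * (ν ⬝ᵥ w) := by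
      rw [lt_inv_mul_iff₀ hs, mul_comm]; linarith [hνK w hw]
    linarith

end Certificate

section Cones

variable {m r : ℕ} {a b : Fin r → Fin m → ℕ}

lemma isClosed_feasCone (J : Set (Fin r × Fin r)) (ε : ℝ) : IsClosed (feasCone J ε) := by
  have : feasCone J ε = (⋂ i, {v | 0 ≤ v i}) ∩ ⋂ p ∈ J, {v | v p.1 ≤ ε * v p.2} := by
    ext v; simp [feasCone]
  rw [this]
  exact (isClosed_iInter fun i => isClosed_le continuous_const (continuous_apply i)).inter
    (isClosed_biInter fun p _ =>
      isClosed_le (continuous_apply _) (continuous_const.mul (continuous_apply _)))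

lemma smul_mem_feasCone {J : Set (Fin r × Fin r)} {ε : ℝ} {v : Fin r → ℝ}
    (hv : v ∈ feasCone J ε) {s : ℝ} (hs : 0 ≤ s) : s • v ∈ feasCone J ε :=
  ⟨fun i => mul_nonneg hs (hv.1 i), fun p hp => by
    simpa [mul_left_comm s ε] using mul_le_mul_of_nonneg_left (hv.2 p hp) hs⟩

lemma isCompact_feasCone_inter_sum_eq_one (J : Set (Fin r × Fin r)) (ε : ℝ) :
    IsCompact (feasCone J ε ∩ {v | ∑ i, v i = 1}) :=
  isCompact_Icc.of_isClosed_subset ((isClosed_feasCone J ε).inter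
    (isClosed_eq (continuous_finsetSum _ fun i _ => continuous_apply i) continuous_const))
    fun _ hv => ⟨fun i => hv.1.1 i,
      fun i => hv.2 ▸ single_le_sum (fun i _ => hv.1.1 i) (Finset.mem_univ i)⟩

lemma convex_feasCone (J : Set (Fin r × Fin r)) (ε : ℝ) : Convex ℝ (feasCone J ε) := by
  rintro v ⟨hv0, hv⟩ w ⟨hw0, hw⟩ s t hs ht -
  refine ⟨fun i => add_nonneg (mul_nonneg hs (hv0 i)) (mul_nonneg ht (hw0 i)), fun p hp => ?_⟩
  simp only [Pi.add_apply, Pi.smul_apply, smul_eq_mul]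
  nlinarith [mul_le_mul_of_nonneg_left (hv p hp) hs, mul_le_mul_of_nonneg_left (hw p hp) ht]

/-- Separate the image under `Γ` of a compact slice of `feasCone J ε` from the cone of vectors
that are nonpositive on `I`. -/
lemma exists_certificate_of_critCone_inter_feasCone {I : Set (Fin m)} {J : Set (Fin r × Fin r)}
    {ε : ℝ} (h : critCone a b I ∩ feasCone J ε = {0}) :
    ∃ μ : Fin m → ℝ, (∀ l ∈ I, 1 ≤ μ l) ∧ (∀ l ∉ I, μ l = 0) ∧
      ∀ v ∈ feasCone J ε, 0 ≤ (μ ᵥ* Gamma a b) ⬝ᵥ v := by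
  set S := feasCone J ε ∩ {v | ∑ i, v i = 1}
  have hSconv : Convex ℝ S := (convex_feasCone J ε).inter fun v hv w hw s t _ _ hst => by
    simp only [Set.mem_ofPred_eq, Pi.add_apply, Pi.smul_apply, smul_eq_mul, sum_add_distrib,
      ← mul_sum] at hv hw ⊢
    rw [hv, hw, mul_one, mul_one, hst]
  have hΓ : Continuous fun v : Fin r → ℝ => Gamma a b *ᵥ v :=
    continuous_const.matrix_mulVec continuous_id
  obtain ⟨μ, hμI, hμ0, hμ⟩ := exists_certificate_of_isCompact (I := I)
    (hSconv.linear_image (Gamma a b).mulVecLin)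
    ((isCompact_feasCone_inter_sum_eq_one J ε).image hΓ) (by
      rintro _ ⟨v, hv, rfl⟩
      by_contra! hneg
      have hv0 : v ∈ ({0} : Set (Fin r → ℝ)) := h ▸ ⟨⟨hv.1.1, hneg⟩, hv.1⟩
      simpa [Set.mem_singleton_iff.1 hv0] using hv.2)
  refine ⟨μ, hμI, hμ0, fun v hv => ?_⟩
  rcases (sum_nonneg fun i _ => hv.1 i).eq_or_lt with hs | hs
  · have hv0 : v = 0 := funext fun i =>
      (sum_eq_zero_iff_of_nonneg fun i _ => hv.1 i).1 hs.symm i (Finset.mem_univ i)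
    simp [hv0]
  · have hslice : (∑ i, v i)⁻¹ • v ∈ S :=
      ⟨smul_mem_feasCone hv (inv_nonneg.2 hs.le), by simp [← mul_sum, inv_mul_cancel₀ hs.ne']⟩
    have := hμ _ ⟨_, hslice, rfl⟩
    rw [Matrix.mulVecLin_apply, mulVec_smul, dotProduct_smul, smul_eq_mul, dotProduct_mulVec]
      at this
    exact (pos_of_mul_pos_right this (inv_nonneg.2 hs.le)).le

end Cones

namespace IsForwardSolution

variable {m r : ℕ} {a b : Fin r → Fin m → ℕ} {k : Fin r → ℝ} {x : ℝ → Fin m → ℝ}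
  {y : Fin m → ℝ}

lemma eventually_half_le_of_semiCons (hx : IsForwardSolution a b k x)
    (hy : MapClusterPt y atTop x) {j : Fin m} (hyj : 0 < y j) {c : Fin m → ℝ}
    (hc0 : ∀ l, 0 ≤ c l) (hcj : 0 < c j) (hc : c ᵥ* Gamma a b = 0)
    (hsupp : ∀ l, 0 < c l → l ∈ insert j {l | y l = 0}) :
    ∀ᶠ ρ in 𝓝[>] 0, ∀ t, 0 ≤ t → (∀ l, y l = 0 → x t l ≤ ρ) → y j / 2 ≤ x t j := by
  have hcy : c ⬝ᵥ y = c j * y j := sum_eq_single j (fun l _ hl => by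
      rcases (hc0 l).lt_or_eq with h | h
      · rw [show y l = 0 from (Set.mem_insert_iff.1 (hsupp l h)).resolve_left hl, mul_zero]
      · rw [← h, zero_mul]) (by simp)
  have hlim : Tendsto (fun ρ => (∑ l, c l) * ρ) (𝓝[>] 0) (𝓝 0) := by
    simpa using ((tendsto_id (x := 𝓝 (0 : ℝ))).const_mul (∑ l, c l)).mono_left
      nhdsWithin_le_nhds
  filter_upwards [self_mem_nhdsWithin, hlim.eventually (gt_mem_nhds (mul_pos hcj (half_pos hyj)))]
    with ρ hρ hsmall t ht hxt
  have hrest : ∑ l ∈ univ.erase j, c l * x t l ≤ (∑ l, c l) * ρ := calc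
    _ ≤ ∑ l ∈ univ.erase j, c l * ρ := sum_le_sum fun l hl => by
        rcases (hc0 l).lt_or_eq with h | h
        · exact mul_le_mul_of_nonneg_left (hxt l
            ((Set.mem_insert_iff.1 (hsupp l h)).resolve_left (ne_of_mem_erase hl))) (hc0 l)
        · simp [← h]
    _ ≤ ∑ l, c l * ρ := sum_le_sum_of_subset_of_nonneg (erase_subset _ _) fun l _ _ =>
        mul_nonneg (hc0 l) (le_of_lt hρ)
    _ = _ := by rw [sum_mul]
  have hsplit : c j * x t j + ∑ l ∈ univ.erase j, c l * x t l = c j * y j := by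
    rw [add_sum_erase univ (fun l => c l * x t l) (Finset.mem_univ j), ← hcy]
    exact (hx.dotProduct_eq hc t ht).trans (hx.dotProduct_eq_of_mapClusterPt hc hy).symm
  by_contra! hlt
  nlinarith [mul_lt_mul_of_pos_left hlt hcj]

lemma exists_rate_mem_feasCone_near_face (hx : IsForwardSolution a b k x) (hk : ∀ i, 0 < k i)
    (hpos : ∀ t, 0 ≤ t → ∀ j, 0 < x t j) {M : ℝ} (hxM : ∀ t, 0 ≤ t → ∀ j, x t j ≤ M)
    (hy : MapClusterPt y atTop x) (hy0 : ∀ j, 0 ≤ y j)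
    (hoff : ∀ j, y j ≠ 0 → ∃ c : Fin m → ℝ, (∀ l, 0 ≤ c l) ∧ 0 < c j ∧ c ᵥ* Gamma a b = 0 ∧
      ∀ l, 0 < c l → l ∈ insert j {l | y l = 0})
    {ε : ℝ} (hε : 0 < ε) :
    ∃ ρ > 0, ∀ t, 0 ≤ t → (∀ l, y l = 0 → x t l ≤ ρ) →
      rate a k (x t) ∈ feasCone (precSet a {j | y j = 0}) ε := by
  have hfar : ∀ j, ∀ᶠ ρ in 𝓝[>] 0, ∀ t, 0 ≤ t → (∀ l, y l = 0 → x t l ≤ ρ) →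
      y j ≠ 0 → y j / 2 ≤ x t j := fun j => by
    by_cases hj : y j = 0
    · exact Eventually.of_forall fun ρ t _ _ h => absurd hj h
    · obtain ⟨c, hc0, hcj, hc, hsupp⟩ := hoff j hj
      exact (hx.eventually_half_le_of_semiCons hy ((hy0 j).lt_of_ne' hj) hc0 hcj hc hsupp).mono
        fun ρ h t ht hxt _ => h t ht hxt
  obtain ⟨ρ, hfar, hfeas, hρ⟩ := ((eventually_all.2 hfar).and
    ((eventually_rate_mem_feasCone hk hy0 M hε).and self_mem_nhdsWithin)).exists
  exact ⟨ρ, hρ, fun t ht hxt => hfeas _ (fun j => (hpos t ht j).le) (hxM t ht) hxt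
    fun j hj => hfar j t ht hxt hj⟩

theorem false_of_dynNonEmptiable_zeroSet (hx : IsForwardSolution a b k x) (hk : ∀ i, 0 < k i)
    (hpos : ∀ t, 0 ≤ t → ∀ j, 0 < x t j) {M : ℝ} (hxM : ∀ t, 0 ≤ t → ∀ j, x t j ≤ M)
    (hy : MapClusterPt y atTop x) (hy0 : ∀ j, 0 ≤ y j) {j₀ : Fin m} (hj₀ : y j₀ = 0)
    (hoff : ∀ j, y j ≠ 0 → ∃ c : Fin m → ℝ, (∀ l, 0 ≤ c l) ∧ 0 < c j ∧ c ᵥ* Gamma a b = 0 ∧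
      ∀ l, 0 < c l → l ∈ insert j {l | y l = 0})
    (hdne : DynNonEmptiable a b {j | y j = 0}) : False := by
  obtain ⟨ε, hε, hcone⟩ := hdne
  obtain ⟨μ, hμZ, hμ0, hμ⟩ := exists_certificate_of_critCone_inter_feasCone hcone
  obtain ⟨ρ, hρ, hfeas⟩ := hx.exists_rate_mem_feasCone_near_face hk hpos hxM hy hy0 hoff hε
  have hμnn : ∀ l, 0 ≤ μ l := fun l => by
    by_cases hl : y l = 0
    exacts [zero_le_one.trans (hμZ l hl), (hμ0 l hl).ge]
  have hxμ : ∀ t, 0 ≤ t → ∀ l, y l = 0 → x t l ≤ μ ⬝ᵥ x t := fun t ht l hl => calc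
    x t l ≤ μ l * x t l := le_mul_of_one_le_left (hpos t ht l).le (hμZ l hl)
    _ ≤ μ ⬝ᵥ x t :=
      single_le_sum (fun j _ => mul_nonneg (hμnn j) (hpos t ht j).le) (Finset.mem_univ l)
  have hP := min_le_of_hasDerivAt_nonneg_below (fun t ht => hx.hasDerivAt_dotProduct μ ht)
    fun t ht hPt => hμ _ (hfeas t ht fun l hl => (hxμ t ht l hl).trans hPt.le)
  have hPy : min ρ (μ ⬝ᵥ x 0) ≤ μ ⬝ᵥ y :=
    (isClosed_le continuous_const (continuous_const.dotProduct continuous_id)).mem_of_mapClusterPt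
      hy ((eventually_ge_atTop 0).mono hP)
  have hμy : μ ⬝ᵥ y = 0 := sum_eq_zero fun l _ => by
    by_cases hl : y l = 0 <;> simp [hl, hμ0]
  have hP0 : 0 < μ ⬝ᵥ x 0 := (hpos 0 le_rfl j₀).trans_le (hxμ 0 le_rfl j₀ hj₀)
  linarith [lt_min hρ hP0]

end IsForwardSolution

/-- a conservative mass-action system whose critical semi-locking sets are all
dynamically non-emptiable and which has no two distinct nested critical locking sets is
persistent. -/
theorem stmt4 {m r : ℕ} (a b : Fin r → Fin m → ℕ) (k : Fin r → ℝ) (hk : ∀ i, 0 < k i)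
    (hcons : Conservative a b)
    (hdne : ∀ I : Set (Fin m), IsSemiLocking a b I → IsCritical a b I →
      DynNonEmptiable a b I)
    (hnest : ¬ ∃ I₁ I₂ : Set (Fin m), IsLocking a I₁ ∧ IsCritical a b I₁ ∧
      IsLocking a I₂ ∧ IsCritical a b I₂ ∧ I₁ ⊂ I₂) :
    ∀ x₀ : Fin m → ℝ, (∀ i, 0 < x₀ i) → ∀ x : ℝ → Fin m → ℝ, x 0 = x₀ →
      IsForwardSolution a b k x → omegaLimitSet x ∩ posBoundary m = ∅ := by
  rintro x₀ hx₀ x rfl hx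
  refine Set.eq_empty_iff_forall_notMem.2 fun y ⟨hy, hy0, j₀, hj₀⟩ => ?_
  have hpos := hx.pos hk hx₀
  obtain ⟨M, hxM⟩ := hx.exists_bound hcons hpos
  have hsemi := hx.isSemiLocking_zeroSet hk hpos hxM hy hy0 ⟨j₀, hj₀⟩
  have hcrit := hx.isCritical_zeroSet hx₀ hy
  have hdneZ := hdne _ hsemi hcrit
  exact hx.false_of_dynNonEmptiable_zeroSet hk hpos hxM hy hy0 hj₀
    (fun j hj => exists_semiCons_insert hnest (hsemi.isLocking hdneZ) hcrit hj) hdneZ
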